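/- arXiv:0907.5311 — 7 statements merged into one kernel-verified Lean document; each statement's English description precedes it below -/
import Mathlib

section
/- Zariski's sign lemma in matrix form: let M be a k×k real symmetric matrix that is negative definite and has nonnegative off-diagonal entries (M i j ≥ 0 for all i ≠ j). If x ∈ ℝ^k satisfies (M.mulVec x) j ≤ 0 for every index j, then x j ≥ 0 for every index j. -/
/-!
Write `x = x⁺ - x⁻`. The vectors `x⁻` and `x⁺` have disjoint supports, so only off-diagonal
entries of `M` contribute to `x⁻ ⬝ᵥ M *ᵥ x⁺`, which is therefore nonnegative; and
`x⁻ ⬝ᵥ M *ᵥ x ≤ 0` because `x⁻ ≥ 0` and `M *ᵥ x ≤ 0`. Hence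
`x⁻ ⬝ᵥ M *ᵥ x⁻ = x⁻ ⬝ᵥ M *ᵥ x⁺ - x⁻ ⬝ᵥ M *ᵥ x ≥ 0`, and negative definiteness forces `x⁻ = 0`.
-/

open Matrix

section OrderedRing

variable {ι R : Type*} [Fintype ι] [CommRing R] [LinearOrder R] [IsOrderedRing R]

lemma negPart_mul_posPart (a : R) : a⁻ * a⁺ = 0 := by
  rcases le_total 0 a with h | h
  · rw [negPart_eq_zero.mpr h, zero_mul]
  · rw [posPart_eq_zero.mpr h, mul_zero]

lemma dotProduct_mulVec_nonneg_of_mul_eq_zero {M : Matrix ι ι R}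
    (hM : ∀ i j, i ≠ j → 0 ≤ M i j) {u v : ι → R} (hu : 0 ≤ u) (hv : 0 ≤ v)
    (huv : ∀ i, u i * v i = 0) : 0 ≤ u ⬝ᵥ M *ᵥ v := by
  refine Finset.sum_nonneg fun i _ => ?_
  rw [mulVec, dotProduct, Finset.mul_sum]
  refine Finset.sum_nonneg fun j _ => ?_
  rcases eq_or_ne i j with rfl | hij
  · rw [mul_left_comm, huv i, mul_zero]
  · exact mul_nonneg (hu i) (mul_nonneg (hM i j hij) (hv j))

lemma dotProduct_mulVec_negPart_nonneg {M : Matrix ι ι R}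
    (hM : ∀ i j, i ≠ j → 0 ≤ M i j) {x : ι → R} (hx : M *ᵥ x ≤ 0) :
    0 ≤ x⁻ ⬝ᵥ M *ᵥ x⁻ := by
  have hpos : 0 ≤ x⁻ ⬝ᵥ M *ᵥ x⁺ :=
    dotProduct_mulVec_nonneg_of_mul_eq_zero hM (negPart_nonneg x) (posPart_nonneg x)
      fun i => by simp only [Pi.negPart_apply, Pi.posPart_apply, negPart_mul_posPart]
  have hneg : x⁻ ⬝ᵥ M *ᵥ x ≤ 0 :=
    Finset.sum_nonpos fun i _ => mul_nonpos_of_nonneg_of_nonpos (negPart_nonneg x i) (hx i)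
  have hsplit : x⁻ ⬝ᵥ M *ᵥ x = x⁻ ⬝ᵥ M *ᵥ x⁺ - x⁻ ⬝ᵥ M *ᵥ x⁻ := by
    rw [← dotProduct_sub, ← mulVec_sub, posPart_sub_negPart]
  rw [hsplit, sub_nonpos] at hneg
  exact hpos.trans hneg

end OrderedRing

theorem zariski_sign_lemma_general {k : ℕ} (M : Matrix (Fin k) (Fin k) ℝ)
    (hnegdef : ∀ x : Fin k → ℝ, x ≠ 0 → x ⬝ᵥ M.mulVec x < 0)
    (hoffdiag : ∀ i j : Fin k, i ≠ j → 0 ≤ M i j)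
    (x : Fin k → ℝ) (hx : ∀ j : Fin k, M.mulVec x j ≤ 0) :
    ∀ j : Fin k, 0 ≤ x j := by
  have hneg : x⁻ = 0 := by
    by_contra hne
    exact (hnegdef _ hne).not_ge (dotProduct_mulVec_negPart_nonneg hoffdiag hx)
  exact negPart_eq_zero.mp hneg

/-- Zariski's sign lemma in matrix form: if `M` is a real symmetric negative
definite `k × k` matrix with nonnegative off-diagonal entries, and
`(M.mulVec x) j ≤ 0` for every `j`, then `x j ≥ 0` for every `j`. -/
theorem zariski_sign_lemma {k : ℕ} (M : Matrix (Fin k) (Fin k) ℝ)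
    (hsymm : M.IsSymm)
    (hnegdef : ∀ x : Fin k → ℝ, x ≠ 0 → x ⬝ᵥ M.mulVec x < 0)
    (hoffdiag : ∀ i j : Fin k, i ≠ j → 0 ≤ M i j)
    (x : Fin k → ℝ) (hx : ∀ j : Fin k, M.mulVec x j ≤ 0) :
    ∀ j : Fin k, 0 ≤ x j :=
  zariski_sign_lemma_general M hnegdef hoffdiag x hx
end

section
/- Suppose D ∈ V satisfies B(D, E_i) < 0 for every i = 1, …, k. Then there exist real numbers f_1, …, f_k ≥ 0 such that B(D − ∑_i f_i E_i, E_j) = 0 for every j = 1, …, k. -/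
open BigOperators

/-!
Since the Gram matrix is negative definite, it is invertible, so there is an `f` with
`B (∑ f i • E i, E j) = B (D, E j)` for all `j`; the point is that `f ≥ 0`. Split `f = f⁺ - f⁻`
and put `u = ∑ f⁺ i • E i`, `v = ∑ f⁻ i • E i`. Then `B (u, v) ≥ 0`, because `f⁺ i f⁻ i = 0` kills
the diagonal and the off-diagonal pairings are nonnegative, while `B (u - v, v) ≤ 0` because
`B (u - v, E j) = B (D, E j) < 0`. Hence `B (v, v) ≥ 0`, and negative definiteness forces `f⁻ = 0`.
-/

section GramMatrix

variable {ι V : Type*} [Fintype ι] [AddCommGroup V] [Module ℝ V]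

theorem LinearMap.apply_sum_smul_sum_smul (B : V →ₗ[ℝ] V →ₗ[ℝ] ℝ) (E : ι → V) (x y : ι → ℝ) :
    B (∑ i, x i • E i) (∑ j, y j • E j) = ∑ i, ∑ j, x i * y j * B (E i) (E j) := by
  simp only [map_sum, map_smul, LinearMap.sum_apply, LinearMap.smul_apply, smul_eq_mul,
    Finset.mul_sum]
  rw [Finset.sum_comm]
  exact Finset.sum_congr rfl fun i _ => Finset.sum_congr rfl fun j _ => by ring

variable {B : V →ₗ[ℝ] V →ₗ[ℝ] ℝ} {E : ι → V}

theorem exists_apply_sum_smul_eq_of_anisotropic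
    (haniso : ∀ x : ι → ℝ, x ≠ 0 → B (∑ i, x i • E i) (∑ i, x i • E i) ≠ 0) (c : ι → ℝ) :
    ∃ f : ι → ℝ, ∀ j, B (∑ i, f i • E i) (E j) = c j := by
  let L : (ι → ℝ) →ₗ[ℝ] ι → ℝ :=
    (LinearMap.pi fun j => B.flip (E j)) ∘ₗ Fintype.linearCombination ℝ E
  have hL : ∀ x j, L x j = B (∑ i, x i • E i) (E j) := fun x j => by
    simp [L, Fintype.linearCombination_apply]
  have hinj : Function.Injective L := by
    refine (injective_iff_map_eq_zero L).mpr fun x hx => ?_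
    by_contra hx0
    refine haniso x hx0 ?_
    rw [map_sum (B (∑ i, x i • E i))]
    simp only [map_smul, smul_eq_mul, ← hL, hx, Pi.zero_apply, mul_zero, Finset.sum_const_zero]
  obtain ⟨f, hf⟩ := LinearMap.injective_iff_surjective.mp hinj c
  exact ⟨f, fun j => by rw [← hL, hf]⟩

theorem nonneg_of_apply_sum_smul_nonpos
    (hoffdiag : ∀ i j, i ≠ j → 0 ≤ B (E i) (E j))
    (hnegdef : ∀ x : ι → ℝ, x ≠ 0 → B (∑ i, x i • E i) (∑ i, x i • E i) < 0)
    {f : ι → ℝ} (hf : ∀ j, B (∑ i, f i • E i) (E j) ≤ 0) : 0 ≤ f := by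
  set w := Fintype.linearCombination ℝ E
  have hw : ∀ x, w x = ∑ i, x i • E i := Fintype.linearCombination_apply ℝ E
  have hcross : 0 ≤ B (w f⁺) (w f⁻) := by
    rw [hw, hw, LinearMap.apply_sum_smul_sum_smul]
    refine Finset.sum_nonneg fun i _ => Finset.sum_nonneg fun j _ => ?_
    rcases eq_or_ne i j with rfl | hij
    · rcases le_total (f i) 0 with hi | hi
      · simp [Pi.posPart_apply, posPart_eq_zero.mpr hi]
      · simp [Pi.negPart_apply, negPart_eq_zero.mpr hi]
    · exact mul_nonneg (mul_nonneg (posPart_nonneg _) (negPart_nonneg _)) (hoffdiag i j hij)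
  have hpair : B (w f) (w f⁻) ≤ 0 := by
    rw [hw f⁻, map_sum]
    refine Finset.sum_nonpos fun j _ => ?_
    rw [map_smul, smul_eq_mul]
    exact mul_nonpos_of_nonneg_of_nonpos (negPart_nonneg _) (hw f ▸ hf j)
  have hsplit : B (w f⁻) (w f⁻) = B (w f⁺) (w f⁻) - B (w f) (w f⁻) := by
    rw [← posPart_sub_negPart f, map_sub, map_sub, LinearMap.sub_apply, posPart_sub_negPart]
    ring
  have hneg : f⁻ = 0 := by
    by_contra h
    have := hnegdef _ h
    rw [← hw] at this
    linarith
  rw [← posPart_sub_negPart f, hneg, sub_zero]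
  exact posPart_nonneg f

end GramMatrix

theorem exists_nonneg_coeffs_orthogonalizing_general
    {V : Type*} [AddCommGroup V] [Module ℝ V]
    (B : V →ₗ[ℝ] V →ₗ[ℝ] ℝ)
    {k : ℕ} (E : Fin k → V)
    (hoffdiag : ∀ i j : Fin k, i ≠ j → 0 ≤ B (E i) (E j))
    (hnegdef : ∀ x : Fin k → ℝ, x ≠ 0 →
      (∑ i : Fin k, ∑ j : Fin k, x i * x j * B (E i) (E j)) < 0)
    (D : V) (hD : ∀ i : Fin k, B D (E i) < 0) :
    ∃ f : Fin k → ℝ, (∀ i : Fin k, 0 ≤ f i) ∧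
      ∀ j : Fin k, B (D - ∑ i : Fin k, f i • E i) (E j) = 0 := by
  have hnegdef' : ∀ x : Fin k → ℝ, x ≠ 0 → B (∑ i, x i • E i) (∑ i, x i • E i) < 0 :=
    fun x hx => (B.apply_sum_smul_sum_smul E x x).trans_lt (hnegdef x hx)
  obtain ⟨f, hf⟩ :=
    exists_apply_sum_smul_eq_of_anisotropic (fun x hx => (hnegdef' x hx).ne) fun j => B D (E j)
  refine ⟨f, nonneg_of_apply_sum_smul_nonpos hoffdiag hnegdef' fun j => ?_, fun j => ?_⟩
  · exact (hf j).trans_le (hD j).le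
  · rw [map_sub, LinearMap.sub_apply, hf, sub_self]

/-- First step of the constructive proof of the Zariski q-decomposition:
if `B (D, E_i) < 0` for every `i`, where the `E_i` pair nonnegatively off the
diagonal and have negative definite Gram matrix, then there are nonnegative
reals `f_i` with `B (D - ∑ f_i E_i, E_j) = 0` for every `j`. -/
theorem exists_nonneg_coeffs_orthogonalizing
    {V : Type*} [AddCommGroup V] [Module ℝ V] [FiniteDimensional ℝ V]
    (B : V →ₗ[ℝ] V →ₗ[ℝ] ℝ) (hsymm : ∀ u v : V, B u v = B v u)
    {k : ℕ} (E : Fin k → V)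
    (hoffdiag : ∀ i j : Fin k, i ≠ j → 0 ≤ B (E i) (E j))
    (hnegdef : ∀ x : Fin k → ℝ, x ≠ 0 →
      (∑ i : Fin k, ∑ j : Fin k, x i * x j * B (E i) (E j)) < 0)
    (D : V) (hD : ∀ i : Fin k, B D (E i) < 0) :
    ∃ f : Fin k → ℝ, (∀ i : Fin k, 0 ≤ f i) ∧
      ∀ j : Fin k, B (D - ∑ i : Fin k, f i • E i) (E j) = 0 :=
  exists_nonneg_coeffs_orthogonalizing_general B E hoffdiag hnegdef D hD
end

section
/- Abstract Zariski q-decomposition relative to a finite family: for every D ∈ V there exist unique real numbers a_1, …, a_k ≥ 0 such that, setting P = D − ∑_i a_i E_i, one has B(P, E_j) ≥ 0 for every j and a_j · B(P, E_j) = 0 for every j (i.e. B(P, E_j) = 0 whenever a_j > 0). -/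
/-!
Writing `Q` for the negated Gram matrix `(-B (E i) (E j))`, which is positive definite, and
`d = (B D (E j))_j`, the conditions on `a` say that `a ≥ 0`, `w = d + Q a ≥ 0` and `a_j w_j = 0`:
a linear complementarity problem. Since `w` is the gradient of the strictly convex, coercive
function `x ↦ xᵀQx/2 + d·x`, these are precisely the first-order conditions for minimizing it
over the nonnegative orthant; a minimizer exists by coercivity, and any two solutions `a`, `b`
satisfy `(a - b)ᵀQ(a - b) = -(a·w_b + b·w_a) ≤ 0`, hence coincide.
-/

open Filter Matrix

theorem exists_pos_mul_sq_norm_le {E : Type*} [NormedAddCommGroup E] [NormedSpace ℝ E]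
    [ProperSpace E] {g : E → ℝ} (hg : Continuous g)
    (hhom : ∀ (c : ℝ) (x : E), g (c • x) = c ^ 2 * g x) (hpos : ∀ x, x ≠ 0 → 0 < g x) :
    ∃ c > 0, ∀ x, c * ‖x‖ ^ 2 ≤ g x := by
  have hg0 : g 0 = 0 := by simpa using hhom 0 0
  rcases subsingleton_or_nontrivial E with _ | _
  · exact ⟨1, one_pos, fun x => by simp [Subsingleton.elim x 0, hg0]⟩
  obtain ⟨u, hu, hmin⟩ := (isCompact_sphere (0 : E) 1).exists_isMinOn
    (NormedSpace.sphere_nonempty.mpr zero_le_one) hg.continuousOn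
  have hu1 : ‖u‖ = 1 := mem_sphere_zero_iff_norm.mp hu
  refine ⟨g u, hpos u (ne_zero_of_norm_ne_zero (by simp [hu1])), fun x => ?_⟩
  rcases eq_or_ne x 0 with rfl | hx
  · simp [hg0]
  have hxu : g u ≤ g (‖x‖⁻¹ • x) := hmin (mem_sphere_zero_iff_norm.mpr (norm_smul_inv_norm hx))
  calc g u * ‖x‖ ^ 2 ≤ g (‖x‖⁻¹ • x) * ‖x‖ ^ 2 := by gcongr
    _ = g x := by rw [hhom]; field_simp

theorem abs_dotProduct_le {ι : Type*} [Fintype ι] (d x : ι → ℝ) :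
    |d ⬝ᵥ x| ≤ (∑ i, |d i|) * ‖x‖ := by
  calc |d ⬝ᵥ x| ≤ ∑ i, |d i| * |x i| := by
        simpa only [dotProduct, abs_mul] using Finset.abs_sum_le_sum_abs (fun i => d i * x i) .univ
    _ ≤ ∑ i, |d i| * ‖x‖ := by
        gcongr with i; exact norm_le_pi_norm x i
    _ = (∑ i, |d i|) * ‖x‖ := (Finset.sum_mul ..).symm

theorem nonneg_and_mul_eq_zero_of_forall_mul_add_sq_nonneg {w q α : ℝ} (hq : 0 < q) (hα : 0 ≤ α)
    (h : ∀ t, -α ≤ t → 0 ≤ t * w + q * t ^ 2) : 0 ≤ w ∧ α * w = 0 := by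
  have hw : 0 ≤ w := by
    by_contra! hw
    have := h (-w / (2 * q)) (by have := div_pos (neg_pos.mpr hw) (mul_pos two_pos hq); linarith)
    field_simp at this
    nlinarith
  refine ⟨hw, ?_⟩
  by_contra! hαw
  have hα' : 0 < α := lt_of_le_of_ne hα (by rintro rfl; simp at hαw)
  have hw' : 0 < w := lt_of_le_of_ne hw (by rintro rfl; simp at hαw)
  set s := min α (w / (2 * q))
  have hs : 0 < s := lt_min hα' (div_pos hw' (mul_pos two_pos hq))
  have hsq : s * (2 * q) ≤ w := (le_div_iff₀ (mul_pos two_pos hq)).mp (min_le_right _ _)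
  have := h (-s) (neg_le_neg (min_le_left _ _))
  nlinarith

namespace Matrix

variable {ι : Type*} [Fintype ι]

def IsLCPSolution (Q : Matrix ι ι ℝ) (d a : ι → ℝ) : Prop :=
  0 ≤ a ∧ 0 ≤ d + Q *ᵥ a ∧ ∀ j, a j * (d + Q *ᵥ a) j = 0

theorem IsLCPSolution.unique {Q : Matrix ι ι ℝ} (hQ : ∀ x, x ≠ 0 → 0 < x ⬝ᵥ Q *ᵥ x)
    {d a b : ι → ℝ} (ha : IsLCPSolution Q d a) (hb : IsLCPSolution Q d b) : a = b := by
  obtain ⟨ha0, hwa, hca⟩ := ha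
  obtain ⟨hb0, hwb, hcb⟩ := hb
  by_contra hab
  have hpos := hQ (a - b) (sub_ne_zero.mpr hab)
  have hdiff : Q *ᵥ (a - b) = (d + Q *ᵥ a) - (d + Q *ᵥ b) := by
    rw [mulVec_sub]; abel
  have hcompl : ∀ {x y : ι → ℝ}, (∀ j, x j * y j = 0) → x ⬝ᵥ y = 0 :=
    fun h => Finset.sum_eq_zero fun j _ => h j
  have hab' := dotProduct_nonneg_of_nonneg ha0 hwb
  have hba' := dotProduct_nonneg_of_nonneg hb0 hwa
  rw [hdiff, sub_dotProduct, dotProduct_sub, dotProduct_sub, hcompl hca, hcompl hcb] at hpos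
  linarith

noncomputable def lcpObjective (Q : Matrix ι ι ℝ) (d x : ι → ℝ) : ℝ :=
  x ⬝ᵥ Q *ᵥ x / 2 + d ⬝ᵥ x

theorem continuous_lcpObjective (Q : Matrix ι ι ℝ) (d : ι → ℝ) :
    Continuous (lcpObjective Q d) := by
  unfold lcpObjective; fun_prop

theorem PosDef.tendsto_lcpObjective_cocompact {Q : Matrix ι ι ℝ} (hQ : Q.PosDef) (d : ι → ℝ) :
    Tendsto (lcpObjective Q d) (cocompact _) atTop := by
  obtain ⟨c, hc, hcoer⟩ := exists_pos_mul_sq_norm_le (g := fun x => x ⬝ᵥ Q *ᵥ x)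
    (by fun_prop)
    (fun c x => by simp only [mulVec_smul, smul_dotProduct, dotProduct_smul, smul_eq_mul]; ring)
    (fun x hx => by simpa using hQ.dotProduct_mulVec_pos hx)
  set L := ∑ i, |d i|
  have hbound : ∀ x, ‖x‖ * (c / 2 * ‖x‖ - L) ≤ lcpObjective Q d x := fun x => by
    have := neg_abs_le (d ⬝ᵥ x)
    have := abs_dotProduct_le d x
    have := hcoer x
    unfold lcpObjective
    nlinarith
  refine tendsto_atTop_mono hbound (tendsto_norm_cocompact_atTop.atTop_mul_atTop₀ ?_)
  exact tendsto_atTop_add_const_right _ _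
    (tendsto_norm_cocompact_atTop.const_mul_atTop (by positivity))

theorem lcpObjective_add_single [DecidableEq ι] {Q : Matrix ι ι ℝ} (hQ : Q.IsSymm)
    (d a : ι → ℝ) (j : ι) (t : ℝ) :
    lcpObjective Q d (a + Pi.single j t) =
      lcpObjective Q d a + t * (d + Q *ᵥ a) j + Q j j / 2 * t ^ 2 := by
  have hsymm : a ⬝ᵥ Q *ᵥ Pi.single j t = t * (Q *ᵥ a) j := by
    rw [dotProduct_mulVec, dotProduct_single, ← mulVec_transpose, hQ.eq, mul_comm]
  have hjj : (Q *ᵥ Pi.single j t) j = Q j j * t := by simp [mulVec_single]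
  simp only [lcpObjective, mulVec_add, add_dotProduct, dotProduct_add, hsymm,
    single_dotProduct, dotProduct_single, hjj, Pi.add_apply]
  ring

theorem PosDef.isLCPSolution_of_isMinOn {Q : Matrix ι ι ℝ} (hQ : Q.PosDef) {d a : ι → ℝ}
    (ha : 0 ≤ a) (hmin : IsMinOn (lcpObjective Q d) (Set.Ici 0) a) : IsLCPSolution Q d a := by
  classical
  have hsymm : Q.IsSymm := isHermitian_iff_isSymm.mp hQ.isHermitian
  have hcoord : ∀ j, 0 ≤ (d + Q *ᵥ a) j ∧ a j * (d + Q *ᵥ a) j = 0 := fun j => by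
    refine nonneg_and_mul_eq_zero_of_forall_mul_add_sq_nonneg (half_pos (hQ.diag_pos (i := j)))
      (ha j) fun t ht => ?_
    have hmem : a + Pi.single j t ∈ Set.Ici 0 := fun i => by
      rcases eq_or_ne i j with rfl | hij
      · simpa [add_comm] using neg_le_iff_add_nonneg.mp ht
      · simpa [hij] using ha i
    have : lcpObjective Q d a ≤ lcpObjective Q d (a + Pi.single j t) := hmin hmem
    rw [lcpObjective_add_single hsymm] at this
    linarith
  exact ⟨ha, fun j => (hcoord j).1, fun j => (hcoord j).2⟩

theorem PosDef.existsUnique_isLCPSolution {Q : Matrix ι ι ℝ} (hQ : Q.PosDef) (d : ι → ℝ) :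
    ∃! a, IsLCPSolution Q d a := by
  obtain ⟨a, ha, hmin⟩ := (continuous_lcpObjective Q d).continuousOn.exists_isMinOn' isClosed_Ici
    (Set.mem_Ici.mpr le_rfl)
    (((hQ.tendsto_lcpObjective_cocompact d).eventually_ge_atTop _).filter_mono inf_le_left)
  have hsol := hQ.isLCPSolution_of_isMinOn ha hmin
  have hpos : ∀ x, x ≠ 0 → 0 < x ⬝ᵥ Q *ᵥ x := fun x hx => by
    simpa using hQ.dotProduct_mulVec_pos hx
  exact ⟨a, hsol, fun b hb => hb.unique hpos hsol⟩

end Matrix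

theorem zariski_q_decomposition_general
    {V : Type*} [AddCommGroup V] [Module ℝ V]
    (B : V →ₗ[ℝ] V →ₗ[ℝ] ℝ) (hsymm : ∀ u v : V, B u v = B v u)
    {k : ℕ} (E : Fin k → V)
    (hnegdef : ∀ x : Fin k → ℝ, x ≠ 0 →
      (∑ i : Fin k, ∑ j : Fin k, x i * x j * B (E i) (E j)) < 0)
    (D : V) :
    ∃! a : Fin k → ℝ, (∀ i : Fin k, 0 ≤ a i) ∧
      (∀ j : Fin k, 0 ≤ B (D - ∑ i : Fin k, a i • E i) (E j)) ∧
      (∀ j : Fin k, a j * B (D - ∑ i : Fin k, a i • E i) (E j) = 0) := by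
  set Q : Matrix (Fin k) (Fin k) ℝ := -Matrix.of fun i j => B (E i) (E j)
  have hQ : Q.PosDef := by
    refine posDef_iff_dotProduct_mulVec.mpr ⟨?_, fun x hx => ?_⟩
    · ext i j; simp [Q, hsymm (E i)]
    · simp only [Q, star_trivial, neg_mulVec, dotProduct_neg, neg_pos]
      simpa only [dotProduct, mulVec, of_apply, Finset.mul_sum, ← mul_assoc, mul_right_comm _ (x _)]
        using hnegdef x hx
  have hP : ∀ (a : Fin k → ℝ) j,
      B (D - ∑ i, a i • E i) (E j) = ((fun j => B D (E j)) + Q *ᵥ a) j := fun a j => by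
    simp [Q, mulVec, dotProduct, hsymm (E j), mul_comm, sub_eq_add_neg]
  simpa only [hP, IsLCPSolution, Pi.le_def, Pi.zero_apply] using
    hQ.existsUnique_isLCPSolution fun j => B D (E j)

/-- Abstract Zariski q-decomposition relative to a finite family: for every `D`
there exist unique nonnegative reals `a_i` such that `P = D - ∑ a_i E_i`
pairs nonnegatively with every `E_j`, and `a_j * B (P, E_j) = 0` for all `j`. -/
theorem zariski_q_decomposition
    {V : Type*} [AddCommGroup V] [Module ℝ V] [FiniteDimensional ℝ V]
    (B : V →ₗ[ℝ] V →ₗ[ℝ] ℝ) (hsymm : ∀ u v : V, B u v = B v u)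
    {k : ℕ} (E : Fin k → V)
    (hoffdiag : ∀ i j : Fin k, i ≠ j → 0 ≤ B (E i) (E j))
    (hnegdef : ∀ x : Fin k → ℝ, x ≠ 0 →
      (∑ i : Fin k, ∑ j : Fin k, x i * x j * B (E i) (E j)) < 0)
    (D : V) :
    ∃! a : Fin k → ℝ, (∀ i : Fin k, 0 ≤ a i) ∧
      (∀ j : Fin k, 0 ≤ B (D - ∑ i : Fin k, a i • E i) (E j)) ∧
      (∀ j : Fin k, a j * B (D - ∑ i : Fin k, a i • E i) (E j) = 0) :=
  zariski_q_decomposition_general B hsymm E hnegdef D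
end

section
/- Minimality of the negative part: suppose a_1, …, a_k ≥ 0 are such that P = D − ∑_i a_i E_i satisfies B(P, E_j) ≥ 0 and a_j · B(P, E_j) = 0 for every j. If c_1, …, c_k ≥ 0 satisfy B(D − ∑_i c_i E_i, E_j) ≥ 0 for every j, then c_j ≥ a_j for every j. -/
/-!
Put `y = (a - c)⁺` and `z = (a - c)⁻`, so that
`∑ yᵢ Eᵢ = (D - ∑ cᵢ Eᵢ) - (D - ∑ aᵢ Eᵢ) + ∑ zᵢ Eᵢ`.
Wherever `yⱼ > 0` we have `aⱼ > cⱼ ≥ 0`, so the middle term pairs to zero with `Eⱼ`, the first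
pairs nonnegatively by assumption on `c`, and the last does too because `zⱼ = 0` and distinct
`Eᵢ` pair nonnegatively. Hence every term of `q(y) = ∑ⱼ yⱼ B(∑ yᵢ Eᵢ, Eⱼ)` is nonnegative, and
negative definiteness forces `y = 0`, i.e. `a ≤ c`.
-/

section GramMatrix

variable {R V ι : Type*} [CommSemiring R] [AddCommMonoid V] [Module R V] [Fintype ι]
  (B : V →ₗ[R] V →ₗ[R] R) (E : ι → V)

theorem apply_sum_smul_eq_sum_mul (x : ι → R) (v : V) :
    B (∑ i, x i • E i) v = ∑ i, x i * B (E i) v := by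
  simp only [map_sum, map_smul, LinearMap.sum_apply, LinearMap.smul_apply, smul_eq_mul]

theorem sum_sum_mul_mul_apply_eq_sum_mul_apply_sum_smul (x : ι → R) :
    ∑ i, ∑ j, x i * x j * B (E i) (E j) = ∑ j, x j * B (∑ i, x i • E i) (E j) := by
  rw [Finset.sum_comm]
  refine Finset.sum_congr rfl fun j _ => ?_
  rw [apply_sum_smul_eq_sum_mul, Finset.mul_sum]
  exact Finset.sum_congr rfl fun i _ => by ring

theorem eq_zero_of_forall_mul_apply_sum_smul_nonneg [PartialOrder R] [IsOrderedRing R]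
    (hnegdef : ∀ x : ι → R, x ≠ 0 → ∑ i, ∑ j, x i * x j * B (E i) (E j) < 0)
    {x : ι → R} (hx : ∀ j, 0 ≤ x j * B (∑ i, x i • E i) (E j)) : x = 0 := by
  by_contra hne
  have hq_nonneg : 0 ≤ ∑ i, ∑ j, x i * x j * B (E i) (E j) := by
    rw [sum_sum_mul_mul_apply_eq_sum_mul_apply_sum_smul]
    exact Finset.sum_nonneg fun j _ => hx j
  exact (hnegdef x hne).not_ge hq_nonneg

theorem apply_sum_smul_nonneg_of_eq_zero [PartialOrder R] [IsOrderedRing R]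
    (hoffdiag : ∀ i j, i ≠ j → 0 ≤ B (E i) (E j))
    {z : ι → R} (hz : ∀ i, 0 ≤ z i) {j : ι} (hzj : z j = 0) :
    0 ≤ B (∑ i, z i • E i) (E j) := by
  rw [apply_sum_smul_eq_sum_mul]
  refine Finset.sum_nonneg fun i _ => ?_
  rcases eq_or_ne i j with rfl | hij
  · simp [hzj]
  · exact mul_nonneg (hz i) (hoffdiag i j hij)

end GramMatrix

theorem zariski_negative_part_minimal_general
    {V : Type*} [AddCommGroup V] [Module ℝ V]
    (B : V →ₗ[ℝ] V →ₗ[ℝ] ℝ)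
    {k : ℕ} (E : Fin k → V)
    (hoffdiag : ∀ i j : Fin k, i ≠ j → 0 ≤ B (E i) (E j))
    (hnegdef : ∀ x : Fin k → ℝ, x ≠ 0 →
      (∑ i : Fin k, ∑ j : Fin k, x i * x j * B (E i) (E j)) < 0)
    (D : V) (a : Fin k → ℝ)
    (haPzero : ∀ j : Fin k, a j * B (D - ∑ i : Fin k, a i • E i) (E j) = 0)
    (c : Fin k → ℝ) (hc : ∀ i : Fin k, 0 ≤ c i)
    (hcP : ∀ j : Fin k, 0 ≤ B (D - ∑ i : Fin k, c i • E i) (E j)) :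
    ∀ j : Fin k, a j ≤ c j := by
  set y : Fin k → ℝ := fun i => (a i - c i)⁺
  set z : Fin k → ℝ := fun i => (a i - c i)⁻
  have hdecomp : ∑ i, y i • E i =
      (D - ∑ i, c i • E i) - (D - ∑ i, a i • E i) + ∑ i, z i • E i := by
    have hyz : ∀ i, y i = a i - c i + z i := fun i => by
      rw [← posPart_sub_negPart (a i - c i)]; ring
    simp only [hyz, add_smul, sub_smul, Finset.sum_add_distrib, Finset.sum_sub_distrib]
    abel
  have hterm : ∀ j, 0 ≤ y j * B (∑ i, y i • E i) (E j) := by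
    intro j
    rcases (posPart_nonneg (a j - c j)).eq_or_lt with hyj | hyj
    · simp [y, ← hyj]
    have hcaj : 0 < a j - c j := posPart_pos_iff.mp hyj
    have hPa : B (D - ∑ i, a i • E i) (E j) = 0 :=
      (mul_eq_zero.mp (haPzero j)).resolve_left (by linarith [hc j])
    have hPz : 0 ≤ B (∑ i, z i • E i) (E j) :=
      apply_sum_smul_nonneg_of_eq_zero B E hoffdiag (fun i => negPart_nonneg _)
        (negPart_eq_zero.mpr hcaj.le)
    refine mul_nonneg hyj.le ?_
    rw [hdecomp, map_add, map_sub, LinearMap.add_apply, LinearMap.sub_apply, hPa]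
    linarith [hcP j]
  have hy : y = 0 := eq_zero_of_forall_mul_apply_sum_smul_nonneg B E hnegdef hterm
  exact fun j => sub_nonpos.mp (posPart_eq_zero.mp (congrFun hy j))

/-- Minimality of the negative part of the Zariski q-decomposition: the
coefficients `a` of the canonical negative part are dominated by the
coefficients `c` of any other effective correction making `D - ∑ c_i E_i`
pair nonnegatively with every `E_j`. -/
theorem zariski_negative_part_minimal
    {V : Type*} [AddCommGroup V] [Module ℝ V] [FiniteDimensional ℝ V]
    (B : V →ₗ[ℝ] V →ₗ[ℝ] ℝ) (hsymm : ∀ u v : V, B u v = B v u)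
    {k : ℕ} (E : Fin k → V)
    (hoffdiag : ∀ i j : Fin k, i ≠ j → 0 ≤ B (E i) (E j))
    (hnegdef : ∀ x : Fin k → ℝ, x ≠ 0 →
      (∑ i : Fin k, ∑ j : Fin k, x i * x j * B (E i) (E j)) < 0)
    (D : V) (a : Fin k → ℝ) (ha : ∀ i : Fin k, 0 ≤ a i)
    (haP : ∀ j : Fin k, 0 ≤ B (D - ∑ i : Fin k, a i • E i) (E j))
    (haPzero : ∀ j : Fin k, a j * B (D - ∑ i : Fin k, a i • E i) (E j) = 0)
    (c : Fin k → ℝ) (hc : ∀ i : Fin k, 0 ≤ c i)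
    (hcP : ∀ j : Fin k, 0 ≤ B (D - ∑ i : Fin k, c i • E i) (E j)) :
    ∀ j : Fin k, a j ≤ c j :=
  zariski_negative_part_minimal_general B E hoffdiag hnegdef D a haPzero c hc hcP
end

section
/- Uniqueness of the Zariski q-decomposition: let E_1, …, E_m ∈ V be pairwise distinct vectors with B(E_i, E_j) ≥ 0 for all i ≠ j, and let S, T ⊆ {1, …, m} be subsets such that the Gram matrix of (E_i)_{i∈S} is negative definite and the Gram matrix of (E_j)_{j∈T} is negative definite. Suppose D = P + ∑_{i∈S} a_i E_i = P' + ∑_{j∈T} b_j E_j where a_i > 0 for i ∈ S, b_j > 0 for j ∈ T, B(P, E_l) ≥ 0 and B(P', E_l) ≥ 0 for all l ∈ S ∪ T, B(P, E_i) = 0 for all i ∈ S, and B(P', E_j) = 0 for all j ∈ T. Then P = P' and ∑_{i∈S} a_i E_i = ∑_{j∈T} b_j E_j. -/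
/-!
Put `N = ∑_{i ∈ S} a_i E_i`, `N' = ∑_{j ∈ T} b_j E_j` and split the coefficient vector of
`N - N'` into its positive part `c ≥ 0`, supported on `S`, and its negative part `d ≥ 0`,
supported on `T`, with disjoint supports. For `u = ∑ c_i E_i` and `w = ∑ d_j E_j` we have
`u - w = N - N' = P' - P`, hence `B(u, u) = B(w, u) + B(P', u) - B(P, u) ≥ 0`: the first term is
a nonnegative combination of off-diagonal entries `B(E_j, E_i)`, the second is nonnegative and
the third vanishes since `P ⟂ E_i` for `i ∈ S`. Negative definiteness on `S` forces `c = 0`,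
and symmetrically `d = 0`.
-/

open Finset

namespace LinearMap

theorem apply_sum_smul_sum_smul_s6 {R M N ι κ : Type*} [CommSemiring R] [AddCommMonoid M]
    [Module R M] [AddCommMonoid N] [Module R N] (B : M →ₗ[R] N →ₗ[R] R) (E : ι → M)
    (F : κ → N) (s : Finset ι) (t : Finset κ) (c : ι → R) (d : κ → R) :
    B (∑ i ∈ s, c i • E i) (∑ j ∈ t, d j • F j) =
      ∑ i ∈ s, ∑ j ∈ t, c i * d j * B (E i) (F j) := by
  simp only [map_sum, map_smul, sum_apply, smul_apply, smul_eq_mul, mul_sum]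
  rw [sum_comm]
  exact sum_congr rfl fun i _ => sum_congr rfl fun j _ => by ring

variable {ι M : Type*} [AddCommGroup M] [Module ℝ M] (B : M →ₗ[ℝ] M →ₗ[ℝ] ℝ) (E : ι → M)

def NegDefOn (S : Finset ι) : Prop :=
  ∀ x : ι → ℝ, (∀ i, i ∉ S → x i = 0) → x ≠ 0 →
    (∑ i ∈ S, ∑ j ∈ S, x i * x j * B (E i) (E j)) < 0

variable {B E}

theorem zero_le_apply_sum_smul_sum_smul_of_disjoint
    (hoffdiag : ∀ i j, i ≠ j → 0 ≤ B (E i) (E j)) {s t : Finset ι} {c d : ι → ℝ}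
    (hc : 0 ≤ c) (hd : 0 ≤ d) (hcd : ∀ i, c i = 0 ∨ d i = 0) :
    0 ≤ B (∑ i ∈ s, c i • E i) (∑ j ∈ t, d j • E j) := by
  rw [apply_sum_smul_sum_smul_s6]
  refine sum_nonneg fun i _ => sum_nonneg fun j _ => ?_
  by_cases hij : i = j
  · subst hij
    rcases hcd i with h | h <;> simp [h]
  · exact mul_nonneg (mul_nonneg (hc i) (hd j)) (hoffdiag i j hij)

theorem eq_zero_of_negDefOn_of_sub_eq {S T : Finset ι} (hS : NegDefOn B E S)
    (hoffdiag : ∀ i j, i ≠ j → 0 ≤ B (E i) (E j)) {c d : ι → ℝ} (hc : 0 ≤ c) (hd : 0 ≤ d)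
    (hcS : ∀ i, i ∉ S → c i = 0) (hcd : ∀ i, c i = 0 ∨ d i = 0) {Q R : M}
    (hQ : ∀ i ∈ S, 0 ≤ B Q (E i)) (hR : ∀ i ∈ S, B R (E i) = 0)
    (hsub : ∑ i ∈ S, c i • E i - ∑ j ∈ T, d j • E j = Q - R) : c = 0 := by
  set u := ∑ i ∈ S, c i • E i
  set w := ∑ j ∈ T, d j • E j
  have hwu : 0 ≤ B w u :=
    zero_le_apply_sum_smul_sum_smul_of_disjoint hoffdiag hd hc fun i => (hcd i).symm
  have hQu : 0 ≤ B Q u := by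
    simp only [u, map_sum, map_smul, smul_eq_mul]
    exact sum_nonneg fun i hi => mul_nonneg (hc i) (hQ i hi)
  have hRu : B R u = 0 := by
    simp only [u, map_sum, map_smul, smul_eq_mul]
    exact sum_eq_zero fun i hi => by rw [hR i hi, mul_zero]
  have huu : 0 ≤ B u u := by
    have hu : u = w + (Q - R) := by rw [← hsub]; abel
    calc 0 ≤ B w u + B Q u - B R u := by linarith
      _ = B (w + (Q - R)) u := by simp only [map_add, map_sub, add_apply, sub_apply]; ring
      _ = B u u := by rw [← hu]
  by_contra hc0
  have := hS c hcS hc0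
  rw [← apply_sum_smul_sum_smul_s6] at this
  linarith

end LinearMap

section PosPart

variable {ι α : Type*} [AddCommGroup α] [LinearOrder α] [IsOrderedAddMonoid α]

theorem posPart_indicator_sub_indicator_of_notMem {S T : Finset ι} {a b : ι → α}
    (hb : ∀ j ∈ T, 0 ≤ b j) {i : ι} (hi : i ∉ S) :
    ((S : Set ι).indicator a - (T : Set ι).indicator b)⁺ i = 0 := by
  rw [Pi.posPart_apply, posPart_eq_zero, Pi.sub_apply, Set.indicator_of_notMem (by simpa),
    zero_sub, neg_nonpos]
  exact Set.indicator_nonneg (fun j hj => hb j hj) i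

theorem posPart_apply_eq_zero_or_negPart_apply_eq_zero (x : ι → α) (i : ι) :
    x⁺ i = 0 ∨ x⁻ i = 0 := by
  rw [Pi.posPart_apply, Pi.negPart_apply, posPart_eq_zero, negPart_eq_zero]
  exact le_total (x i) 0

end PosPart

section FiniteSum

variable {ι M : Type*} [Fintype ι] [AddCommGroup M] [Module ℝ M]

theorem sum_posPart_smul_sub_sum_negPart_smul {S T : Finset ι} {x : ι → ℝ}
    (hS : ∀ i, i ∉ S → x⁺ i = 0) (hT : ∀ i, i ∉ T → x⁻ i = 0) (E : ι → M) :
    ∑ i ∈ S, x⁺ i • E i - ∑ i ∈ T, x⁻ i • E i = ∑ i, x i • E i := by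
  rw [sum_subset (subset_univ S) fun i _ hi => by rw [hS i hi, zero_smul],
    sum_subset (subset_univ T) fun i _ hi => by rw [hT i hi, zero_smul], ← sum_sub_distrib]
  refine sum_congr rfl fun i _ => ?_
  rw [← sub_smul, ← Pi.sub_apply, posPart_sub_negPart]

theorem sum_indicator_smul (S : Finset ι) (a : ι → ℝ) (E : ι → M) :
    ∑ i, (S : Set ι).indicator a i • E i = ∑ i ∈ S, a i • E i := by
  simp_rw [← Set.indicator_smul_apply_left]
  exact sum_indicator_subset _ (subset_univ S)

end FiniteSum

theorem zariski_q_decomposition_unique_general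
    {V : Type*} [AddCommGroup V] [Module ℝ V]
    (B : V →ₗ[ℝ] V →ₗ[ℝ] ℝ)
    {m : ℕ} (E : Fin m → V)
    (hoffdiag : ∀ i j : Fin m, i ≠ j → 0 ≤ B (E i) (E j))
    (S T : Finset (Fin m))
    (hS : ∀ x : Fin m → ℝ, (∀ i, i ∉ S → x i = 0) → x ≠ 0 →
      (∑ i ∈ S, ∑ j ∈ S, x i * x j * B (E i) (E j)) < 0)
    (hT : ∀ x : Fin m → ℝ, (∀ j, j ∉ T → x j = 0) → x ≠ 0 →
      (∑ i ∈ T, ∑ j ∈ T, x i * x j * B (E i) (E j)) < 0)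
    (D P P' : V) (a b : Fin m → ℝ)
    (ha : ∀ i ∈ S, 0 < a i) (hb : ∀ j ∈ T, 0 < b j)
    (hdecS : D = P + ∑ i ∈ S, a i • E i)
    (hdecT : D = P' + ∑ j ∈ T, b j • E j)
    (hPnn : ∀ l ∈ S ∪ T, 0 ≤ B P (E l))
    (hP'nn : ∀ l ∈ S ∪ T, 0 ≤ B P' (E l))
    (hPS : ∀ i ∈ S, B P (E i) = 0)
    (hP'T : ∀ j ∈ T, B P' (E j) = 0) :
    P = P' ∧ (∑ i ∈ S, a i • E i) = ∑ j ∈ T, b j • E j := by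
  set x : Fin m → ℝ := (S : Set (Fin m)).indicator a - (T : Set (Fin m)).indicator b
  have hxS : ∀ i, i ∉ S → x⁺ i = 0 := fun i hi =>
    posPart_indicator_sub_indicator_of_notMem (fun j hj => (hb j hj).le) hi
  have hxT : ∀ i, i ∉ T → x⁻ i = 0 := fun i hi => by
    rw [← posPart_neg, neg_sub]
    exact posPart_indicator_sub_indicator_of_notMem (fun j hj => (ha j hj).le) hi
  have hsplit : ∑ i ∈ S, x⁺ i • E i - ∑ i ∈ T, x⁻ i • E i =
      (∑ i ∈ S, a i • E i) - ∑ j ∈ T, b j • E j := by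
    simp only [sum_posPart_smul_sub_sum_negPart_smul hxS hxT, x, Pi.sub_apply, sub_smul,
      sum_sub_distrib, sum_indicator_smul]
  have hdiff : (∑ i ∈ S, a i • E i) - ∑ j ∈ T, b j • E j = P' - P := by
    rw [sub_eq_sub_iff_add_eq_add, add_comm, ← hdecS, hdecT, add_comm]
  have hpos : x⁺ = 0 :=
    LinearMap.eq_zero_of_negDefOn_of_sub_eq hS hoffdiag (posPart_nonneg x) (negPart_nonneg x) hxS
      (posPart_apply_eq_zero_or_negPart_apply_eq_zero x)
      (fun i hi => hP'nn i (mem_union_left T hi)) hPS (hsplit.trans hdiff)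
  have hneg : x⁻ = 0 :=
    LinearMap.eq_zero_of_negDefOn_of_sub_eq hT hoffdiag (negPart_nonneg x) (posPart_nonneg x) hxT
      (fun i => (posPart_apply_eq_zero_or_negPart_apply_eq_zero x i).symm)
      (fun i hi => hPnn i (mem_union_right S hi)) hP'T
      (by rw [← neg_sub, hsplit.trans hdiff, neg_sub])
  have hN : (∑ i ∈ S, a i • E i) = ∑ j ∈ T, b j • E j := by
    rw [← sub_eq_zero, ← hsplit, hpos, hneg]
    simp
  exact ⟨(sub_eq_zero.1 (by rw [← hdiff, hN, sub_self])).symm, hN⟩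

/-- Uniqueness of the Zariski q-decomposition: two decompositions
`D = P + ∑_{i ∈ S} a_i E_i = P' + ∑_{j ∈ T} b_j E_j`, with positive
coefficients, negative definite Gram matrices on the supports, and
orthogonality/nonnegativity conditions, must coincide. -/
theorem zariski_q_decomposition_unique
    {V : Type*} [AddCommGroup V] [Module ℝ V] [FiniteDimensional ℝ V]
    (B : V →ₗ[ℝ] V →ₗ[ℝ] ℝ) (hsymm : ∀ u v : V, B u v = B v u)
    {m : ℕ} (E : Fin m → V) (hE : Function.Injective E)
    (hoffdiag : ∀ i j : Fin m, i ≠ j → 0 ≤ B (E i) (E j))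
    (S T : Finset (Fin m))
    (hS : ∀ x : Fin m → ℝ, (∀ i, i ∉ S → x i = 0) → x ≠ 0 →
      (∑ i ∈ S, ∑ j ∈ S, x i * x j * B (E i) (E j)) < 0)
    (hT : ∀ x : Fin m → ℝ, (∀ j, j ∉ T → x j = 0) → x ≠ 0 →
      (∑ i ∈ T, ∑ j ∈ T, x i * x j * B (E i) (E j)) < 0)
    (D P P' : V) (a b : Fin m → ℝ)
    (ha : ∀ i ∈ S, 0 < a i) (hb : ∀ j ∈ T, 0 < b j)
    (hdecS : D = P + ∑ i ∈ S, a i • E i)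
    (hdecT : D = P' + ∑ j ∈ T, b j • E j)
    (hPnn : ∀ l ∈ S ∪ T, 0 ≤ B P (E l))
    (hP'nn : ∀ l ∈ S ∪ T, 0 ≤ B P' (E l))
    (hPS : ∀ i ∈ S, B P (E i) = 0)
    (hP'T : ∀ j ∈ T, B P' (E j) = 0) :
    P = P' ∧ (∑ i ∈ S, a i • E i) = ∑ j ∈ T, b j • E j :=
  zariski_q_decomposition_unique_general B E hoffdiag S T hS hT D P P' a b ha hb hdecS hdecT hPnn
    hP'nn hPS hP'T
end

section
/- Coefficient domination (core of Lemma 2.1(3), second part): suppose D = ∑_i d_i E_i + D' where d_i ≥ 0 for all i and B(D', E_j) ≥ 0 for every j. If e ∈ ℝ^k satisfies B(D − ∑_i e_i E_i, E_j) ≤ 0 for every j, then e_j ≤ d_j for every j. -/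
/-!
Put `f = e - d`. Expanding the hypotheses gives `∑ i, f i * B (E i) (E j) ≥ B D' (E j) ≥ 0`
for every `j`. Pairing this with the positive part `f⁺` and using that the off-diagonal entries
of the Gram matrix are nonnegative shows that the quadratic form of the Gram matrix is
nonnegative at `f⁺`; negative definiteness then forces `f⁺ = 0`, i.e. `e ≤ d`.
-/

open Finset

lemma posPart_mul_posPart_eq_posPart_mul (a : ℝ) : a⁺ * a⁺ = a⁺ * a := by
  rcases le_total a 0 with ha | ha
  · simp [posPart_eq_zero.mpr ha]
  · rw [posPart_of_nonneg ha]

theorem nonpos_of_forall_sum_mul_nonneg {ι : Type*} [Fintype ι] (M : ι → ι → ℝ)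
    (hoff : ∀ i j, i ≠ j → 0 ≤ M i j)
    (hneg : ∀ x : ι → ℝ, 0 ≤ x → x ≠ 0 → ∑ i, ∑ j, x i * x j * M i j < 0)
    (f : ι → ℝ) (hf : ∀ j, 0 ≤ ∑ i, f i * M i j) : f ≤ 0 := by
  rw [← posPart_eq_zero]
  by_contra hf_pos
  have hterm : ∀ i j, f⁺ j * f i * M i j ≤ f⁺ j * f⁺ i * M i j := by
    intro i j
    rcases eq_or_ne i j with rfl | hij
    · rw [Pi.posPart_apply, posPart_mul_posPart_eq_posPart_mul]
    · exact mul_le_mul_of_nonneg_right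
        (mul_le_mul_of_nonneg_left (le_posPart _) (posPart_nonneg _)) (hoff i j hij)
  have hquad : 0 ≤ ∑ i, ∑ j, f⁺ i * f⁺ j * M i j :=
    calc 0 ≤ ∑ j, f⁺ j * ∑ i, f i * M i j :=
          sum_nonneg fun j _ => mul_nonneg (posPart_nonneg _) (hf j)
      _ = ∑ j, ∑ i, f⁺ j * f i * M i j := by simp only [mul_sum, mul_assoc]
      _ ≤ ∑ j, ∑ i, f⁺ j * f⁺ i * M i j :=
          sum_le_sum fun j _ => sum_le_sum fun i _ => hterm i j
      _ = ∑ i, ∑ j, f⁺ i * f⁺ j * M i j := by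
          rw [sum_comm]; simp only [mul_comm (f⁺ _) (f⁺ _)]
  exact (hneg _ (posPart_nonneg f) hf_pos).not_ge hquad

lemma LinearMap.sum_smul_apply₂ {ι V : Type*} [Fintype ι] [AddCommGroup V] [Module ℝ V]
    (B : V →ₗ[ℝ] V →ₗ[ℝ] ℝ) (c : ι → ℝ) (E : ι → V) (v : V) :
    B (∑ i, c i • E i) v = ∑ i, c i * B (E i) v := by
  simp only [map_sum, map_smul, LinearMap.sum_apply, LinearMap.smul_apply, smul_eq_mul]

theorem coefficient_domination_general
    {V : Type*} [AddCommGroup V] [Module ℝ V]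
    (B : V →ₗ[ℝ] V →ₗ[ℝ] ℝ)
    {k : ℕ} (E : Fin k → V)
    (hoffdiag : ∀ i j : Fin k, i ≠ j → 0 ≤ B (E i) (E j))
    (hnegdef : ∀ x : Fin k → ℝ, x ≠ 0 →
      (∑ i : Fin k, ∑ j : Fin k, x i * x j * B (E i) (E j)) < 0)
    (D D' : V) (d : Fin k → ℝ)
    (hdec : D = (∑ i : Fin k, d i • E i) + D')
    (hD' : ∀ j : Fin k, 0 ≤ B D' (E j))
    (e : Fin k → ℝ)
    (he : ∀ j : Fin k, B (D - ∑ i : Fin k, e i • E i) (E j) ≤ 0) :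
    ∀ j : Fin k, e j ≤ d j := by
  have hrest : ∀ j, B (D - ∑ i, e i • E i) (E j) =
      B D' (E j) - ∑ i, (e - d) i * B (E i) (E j) := by
    intro j
    have : D - ∑ i, e i • E i = D' - ∑ i, (e - d) i • E i := by
      simp only [hdec, Pi.sub_apply, sub_smul, sum_sub_distrib]
      abel
    rw [this, map_sub, LinearMap.sub_apply, LinearMap.sum_smul_apply₂]
  have hf : ∀ j, 0 ≤ ∑ i, (e - d) i * B (E i) (E j) := fun j => by
    linarith [hD' j, hrest j ▸ he j]
  have hle : e - d ≤ 0 :=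
    nonpos_of_forall_sum_mul_nonneg (fun i j => B (E i) (E j)) hoffdiag
      (fun x _ hx => hnegdef x hx) (e - d) hf
  exact fun j => sub_nonpos.mp (hle j)

/-- Coefficient domination (core of Lemma 2.1(3), second part): if
`D = ∑ d_i E_i + D'` with `d_i ≥ 0` and `B (D', E_j) ≥ 0` for all `j`, and
`e` satisfies `B (D - ∑ e_i E_i, E_j) ≤ 0` for all `j`, then `e_j ≤ d_j`
for all `j`. -/
theorem coefficient_domination
    {V : Type*} [AddCommGroup V] [Module ℝ V] [FiniteDimensional ℝ V]
    (B : V →ₗ[ℝ] V →ₗ[ℝ] ℝ) (hsymm : ∀ u v : V, B u v = B v u)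
    {k : ℕ} (E : Fin k → V)
    (hoffdiag : ∀ i j : Fin k, i ≠ j → 0 ≤ B (E i) (E j))
    (hnegdef : ∀ x : Fin k → ℝ, x ≠ 0 →
      (∑ i : Fin k, ∑ j : Fin k, x i * x j * B (E i) (E j)) < 0)
    (D D' : V) (d : Fin k → ℝ) (hd : ∀ i : Fin k, 0 ≤ d i)
    (hdec : D = (∑ i : Fin k, d i • E i) + D')
    (hD' : ∀ j : Fin k, 0 ≤ B D' (E j))
    (e : Fin k → ℝ)
    (he : ∀ j : Fin k, B (D - ∑ i : Fin k, e i • E i) (E j) ≤ 0) :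
    ∀ j : Fin k, e j ≤ d j :=
  coefficient_domination_general B E hoffdiag hnegdef D D' d hdec hD' e he
end

section
/- Matrix complementarity form of the Zariski q-decomposition: let M be a k×k real symmetric matrix that is negative definite and has nonnegative off-diagonal entries (M i j ≥ 0 for all i ≠ j). Then for every b ∈ ℝ^k there exists a unique a ∈ ℝ^k with a ≥ 0 entrywise, (b − M.mulVec a) j ≥ 0 for every j, and a j · (b − M.mulVec a) j = 0 for every j. -/
/-!
Since `-M` is symmetric positive definite, the energy `E x = b ⬝ᵥ x - (x ⬝ᵥ M *ᵥ x) / 2` is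
coercive, so it attains its minimum on the nonnegative orthant. Along the coordinate line
`t ↦ a + t eⱼ` the energy is `E a + t wⱼ - t² Mⱼⱼ / 2` with `w = b - M *ᵥ a`, and one-sided
first-order optimality at `t = 0` gives `wⱼ ≥ 0`, with `wⱼ = 0` whenever `aⱼ > 0`.
For two solutions `a, a'`, complementarity turns `(a' - a) ⬝ᵥ M *ᵥ (a' - a)` into
`a' ⬝ᵥ w + a ⬝ᵥ w' ≥ 0`, which negative definiteness allows only if `a = a'`.
-/

open Matrix Filter Topology Set

theorem exists_pos_mul_norm_sq_le {E : Type*} [NormedAddCommGroup E] [NormedSpace ℝ E]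
    [FiniteDimensional ℝ E] {q : E → ℝ} (hq : Continuous q)
    (hsmul : ∀ (r : ℝ) (x : E), q (r • x) = r ^ 2 * q x) (hpos : ∀ x, x ≠ 0 → 0 < q x) :
    ∃ c > 0, ∀ x, c * ‖x‖ ^ 2 ≤ q x := by
  have hq0 : q 0 = 0 := by simpa using hsmul 0 0
  rcases subsingleton_or_nontrivial E with hE | hE
  · exact ⟨1, one_pos, fun x => by simp [Subsingleton.elim x 0, hq0]⟩
  obtain ⟨x₀, hx₀, hmin⟩ := (isCompact_sphere (0 : E) 1).exists_isMinOn
    (NormedSpace.sphere_nonempty.2 zero_le_one) hq.continuousOn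
  refine ⟨q x₀, hpos x₀ (ne_zero_of_mem_unit_sphere ⟨x₀, hx₀⟩), fun x => ?_⟩
  rcases eq_or_ne x 0 with rfl | hx
  · simp [hq0]
  have hnorm : 0 < ‖x‖ := norm_pos_iff.2 hx
  have hle : q x₀ ≤ (‖x‖⁻¹) ^ 2 * q x := by
    rw [← hsmul]
    exact hmin (by simp [norm_smul, hnorm.ne'])
  calc q x₀ * ‖x‖ ^ 2 ≤ (‖x‖⁻¹) ^ 2 * q x * ‖x‖ ^ 2 := by gcongr
    _ = q x := by field_simp

theorem nonneg_and_mul_eq_zero_of_forall_nonneg {s w d : ℝ} (hs : 0 ≤ s)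
    (h : ∀ t, -s ≤ t → 0 ≤ t * (w + t * d)) : 0 ≤ w ∧ s * w = 0 := by
  have hlim : Tendsto (fun t => w + t * d) (𝓝 0) (𝓝 w) := by
    simpa using ((continuous_id.mul continuous_const).const_add w).tendsto (0 : ℝ)
  have hw : 0 ≤ w := by
    refine ge_of_tendsto (hlim.mono_left (nhdsWithin_le_nhds (s := Ioi 0))) ?_
    filter_upwards [self_mem_nhdsWithin] with t (ht : 0 < t)
    exact nonneg_of_mul_nonneg_right (h t (by linarith)) ht
  refine ⟨hw, ?_⟩
  rcases hs.eq_or_lt with rfl | hs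
  · simp
  suffices w ≤ 0 by simp [le_antisymm this hw]
  refine le_of_tendsto (hlim.mono_left (nhdsWithin_le_nhds (s := Iio 0))) ?_
  filter_upwards [Ioo_mem_nhdsLT (neg_neg_of_pos hs)] with t ⟨hst, ht⟩
  exact nonpos_of_mul_nonneg_right (h t hst.le) ht

section Complementarity

variable {ι : Type*} [Fintype ι] (M : Matrix ι ι ℝ) (b : ι → ℝ)

def IsComplementaritySolution (a : ι → ℝ) : Prop :=
  0 ≤ a ∧ 0 ≤ b - M *ᵥ a ∧ ∀ j, a j * (b - M *ᵥ a) j = 0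

noncomputable def complementarityEnergy (x : ι → ℝ) : ℝ :=
  b ⬝ᵥ x - x ⬝ᵥ M *ᵥ x / 2

variable {M b}

theorem Matrix.IsSymm.dotProduct_mulVec_comm (hM : M.IsSymm) (v w : ι → ℝ) :
    v ⬝ᵥ M *ᵥ w = w ⬝ᵥ M *ᵥ v := by
  rw [dotProduct_mulVec, dotProduct_comm, ← mulVec_transpose, hM.eq]

theorem abs_dotProduct_le_sum_abs_mul_norm (v x : ι → ℝ) :
    |v ⬝ᵥ x| ≤ (∑ i, |v i|) * ‖x‖ := by
  rw [Finset.sum_mul]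
  refine (Finset.abs_sum_le_sum_abs _ _).trans (Finset.sum_le_sum fun i _ => ?_)
  rw [abs_mul]
  exact mul_le_mul_of_nonneg_left (norm_le_pi_norm x i) (abs_nonneg _)

theorem complementarityEnergy_add (hM : M.IsSymm) (a v : ι → ℝ) :
    complementarityEnergy M b (a + v) =
      complementarityEnergy M b a + v ⬝ᵥ (b - M *ᵥ a) - v ⬝ᵥ M *ᵥ v / 2 := by
  simp only [complementarityEnergy, mulVec_add, dotProduct_add, add_dotProduct, dotProduct_sub,
    hM.dotProduct_mulVec_comm a v, dotProduct_comm b]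
  ring

theorem exists_isMinOn_complementarityEnergy
    (hneg : ∀ x : ι → ℝ, x ≠ 0 → x ⬝ᵥ M *ᵥ x < 0) :
    ∃ a ∈ Ici 0, IsMinOn (complementarityEnergy M b) (Ici 0) a := by
  have hsmul (r : ℝ) (x : ι → ℝ) : -((r • x) ⬝ᵥ M *ᵥ (r • x)) = r ^ 2 * -(x ⬝ᵥ M *ᵥ x) := by
    simp only [mulVec_smul, dotProduct_smul, smul_dotProduct, smul_eq_mul]
    ring
  obtain ⟨c, hc, hcq⟩ := exists_pos_mul_norm_sq_le (q := fun x : ι → ℝ => -(x ⬝ᵥ M *ᵥ x))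
    (by fun_prop) hsmul (fun x hx => neg_pos.2 (hneg x hx))
  have hcont : Continuous (complementarityEnergy M b) := by
    unfold complementarityEnergy; fun_prop
  have hfar : ∀ᶠ x in cocompact (ι → ℝ), 2 * (∑ i, |b i|) / c ≤ ‖x‖ :=
    tendsto_norm_cocompact_atTop.eventually_ge_atTop _
  refine hcont.continuousOn.exists_isMinOn' isClosed_Ici self_mem_Ici
    ((hfar.filter_mono inf_le_left).mono fun x hx => ?_)
  have hlin := neg_le_of_abs_le (abs_dotProduct_le_sum_abs_mul_norm b x)
  have hquad := hcq x
  -- `E x ≥ ‖x‖ * (c * ‖x‖ / 2 - ∑ i, |b i|) ≥ 0 = E 0`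
  rw [div_le_iff₀ hc] at hx
  simp only [complementarityEnergy, dotProduct_zero, zero_dotProduct, sub_zero, zero_div]
  nlinarith [norm_nonneg x]

theorem isComplementaritySolution_of_isMinOn [DecidableEq ι] (hM : M.IsSymm) {a : ι → ℝ}
    (ha : 0 ≤ a) (hmin : IsMinOn (complementarityEnergy M b) (Ici 0) a) :
    IsComplementaritySolution M b a := by
  have hcoord (j : ι) : 0 ≤ (b - M *ᵥ a) j ∧ a j * (b - M *ᵥ a) j = 0 := by
    refine nonneg_and_mul_eq_zero_of_forall_nonneg (d := -M j j / 2) (ha j) fun t ht => ?_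
    have hmem : a + Pi.single j t ∈ Ici 0 := by
      intro i
      rcases eq_or_ne i j with rfl | hij
      · simpa using (by linarith : 0 ≤ a i + t)
      · simpa [hij] using ha i
    have hle := isMinOn_iff.1 hmin _ hmem
    rw [complementarityEnergy_add hM] at hle
    simp only [single_dotProduct, mulVec_single, Pi.smul_apply, col_apply, op_smul_eq_mul] at hle
    linarith
  exact ⟨ha, fun j => (hcoord j).1, fun j => (hcoord j).2⟩

theorem IsComplementaritySolution.eq
    (hneg : ∀ x : ι → ℝ, x ≠ 0 → x ⬝ᵥ M *ᵥ x < 0) {a a' : ι → ℝ}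
    (ha : IsComplementaritySolution M b a) (ha' : IsComplementaritySolution M b a') :
    a = a' := by
  by_contra hne
  have hgap (x : ι → ℝ) (hx : IsComplementaritySolution M b x) : x ⬝ᵥ (b - M *ᵥ x) = 0 :=
    Finset.sum_eq_zero fun j _ => hx.2.2 j
  -- complementarity leaves only the cross terms, which are nonnegative
  have hcross : (a' - a) ⬝ᵥ M *ᵥ (a' - a) =
      a' ⬝ᵥ (b - M *ᵥ a) + a ⬝ᵥ (b - M *ᵥ a') := by
    have := hgap a ha
    have := hgap a' ha'
    simp only [mulVec_sub, dotProduct_sub, sub_dotProduct] at *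
    linarith
  have := hneg (a' - a) (sub_ne_zero.2 (Ne.symm hne))
  have := dotProduct_nonneg_of_nonneg ha'.1 ha.2.1
  have := dotProduct_nonneg_of_nonneg ha.1 ha'.2.1
  linarith

end Complementarity

theorem zariski_matrix_complementarity_general {k : ℕ}
    (M : Matrix (Fin k) (Fin k) ℝ) (hsymm : M.IsSymm)
    (hnegdef : ∀ x : Fin k → ℝ, x ≠ 0 → x ⬝ᵥ M.mulVec x < 0)
    (b : Fin k → ℝ) :
    ∃! a : Fin k → ℝ, (∀ i : Fin k, 0 ≤ a i) ∧
      (∀ j : Fin k, 0 ≤ (b - M.mulVec a) j) ∧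
      (∀ j : Fin k, a j * (b - M.mulVec a) j = 0) := by
  obtain ⟨a, ha, hmin⟩ := exists_isMinOn_complementarityEnergy (b := b) hnegdef
  have hsol := isComplementaritySolution_of_isMinOn hsymm ha hmin
  exact ⟨a, hsol, fun a' ha' => (hsol.eq hnegdef ha').symm⟩

/-- Matrix complementarity form of the Zariski q-decomposition: for a real
symmetric negative definite matrix `M` with nonnegative off-diagonal entries
and any `b`, there is a unique entrywise nonnegative `a` with
`(b - M.mulVec a) j ≥ 0` for all `j` and complementarity
`a j * (b - M.mulVec a) j = 0` for all `j`. -/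
theorem zariski_matrix_complementarity {k : ℕ}
    (M : Matrix (Fin k) (Fin k) ℝ) (hsymm : M.IsSymm)
    (hnegdef : ∀ x : Fin k → ℝ, x ≠ 0 → x ⬝ᵥ M.mulVec x < 0)
    (hoffdiag : ∀ i j : Fin k, i ≠ j → 0 ≤ M i j)
    (b : Fin k → ℝ) :
    ∃! a : Fin k → ℝ, (∀ i : Fin k, 0 ≤ a i) ∧
      (∀ j : Fin k, 0 ≤ (b - M.mulVec a) j) ∧
      (∀ j : Fin k, a j * (b - M.mulVec a) j = 0) :=
  zariski_matrix_complementarity_general M hsymm hnegdef b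
end
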